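/- Let T be a tree and y a Fiedler vector of T with no zero entries. Then there exists exactly one edge (u,w) of T with y_u > 0 and y_w < 0 (the characteristic edge). -/

import Mathlib

open Matrix BigOperators

variable {V : Type*} [Fintype V] [DecidableEq V]

/-- The algebraic connectivity: the second smallest Laplacian eigenvalue, characterized
as the minimum Rayleigh quotient over nonzero vectors orthogonal to the all-ones vector. -/
noncomputable def algConn (G : SimpleGraph V) [DecidableRel G.Adj] : ℝ :=
  sInf {r : ℝ | ∃ x : V → ℝ, x ≠ 0 ∧ (∑ v, x v) = 0 ∧
    r = (x ⬝ᵥ (G.lapMatrix ℝ) *ᵥ x) / (x ⬝ᵥ x)}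

/-!
Fiedler's argument. Let `C` be a component of the subgraph spanned by the vertices where `y` is
positive and `z` the restriction of `y` to `C`. From `L y = λ y` one gets
`zᵀ L z = λ ‖z‖² + ∑ y a * y b` over the edges `ab` leaving `C`, and such edges end at negative
vertices, so `zᵀ L z < λ ‖z‖²`. Restrictions `z₁, z₂` to two distinct components are orthogonal
for both forms, so `(∑ z₂) • z₁ - (∑ z₁) • z₂` sums to zero and has Rayleigh quotient below
`λ = algConn`, which is impossible. Hence the positive vertices, and likewise the negative ones,
span connected subgraphs, and in a tree two sign-changing edges would close a cycle. A
sign-changing edge exists because `∑ y = 0`, as `algConn` of a connected graph is positive: it is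
the minimum of the Rayleigh quotient on a compact set.
-/

open SimpleGraph Finset

namespace Matrix

lemma dotProduct_self_pos {ι : Type*} [Fintype ι] {x : ι → ℝ} (hx : x ≠ 0) : 0 < x ⬝ᵥ x :=
  (sum_nonneg fun v _ => mul_self_nonneg (x v)).lt_of_ne' (dotProduct_self_eq_zero.not.2 hx)

lemma rayleigh_smul {ι : Type*} [Fintype ι] (A : Matrix ι ι ℝ) (x : ι → ℝ) {c : ℝ}
    (hc : c ≠ 0) :
    (c • x) ⬝ᵥ A *ᵥ (c • x) / ((c • x) ⬝ᵥ (c • x)) = x ⬝ᵥ A *ᵥ x / (x ⬝ᵥ x) := by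
  simp only [mulVec_smul, smul_dotProduct, dotProduct_smul, smul_eq_mul, ← mul_assoc]
  exact mul_div_mul_left _ _ (mul_ne_zero hc hc)

lemma indicator_dotProduct_indicator_of_disjoint {ι : Type*} [Fintype ι] {C D : Set ι}
    (hCD : Disjoint C D) (y z : ι → ℝ) : C.indicator y ⬝ᵥ D.indicator z = 0 := by
  refine sum_eq_zero fun a _ => ?_
  by_cases ha : a ∈ C
  · rw [Set.indicator_of_notMem (hCD.notMem_of_mem_left ha), mul_zero]
  · rw [Set.indicator_of_notMem ha, zero_mul]

end Matrix

namespace SimpleGraph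

section Sign

variable {U : Type*} {H : SimpleGraph U} {y : U → ℝ}

def positiveGraph (H : SimpleGraph U) (y : U → ℝ) : SimpleGraph U where
  Adj a b := H.Adj a b ∧ 0 < y a ∧ 0 < y b
  symm := ⟨fun _ _ h => ⟨h.1.symm, h.2.2, h.2.1⟩⟩
  loopless := ⟨fun a h => H.loopless.irrefl a h.1⟩

lemma pos_of_reachable_positiveGraph {u v : U} (h : (H.positiveGraph y).Reachable u v)
    (hu : 0 < y u) : 0 < y v := by
  obtain ⟨p⟩ := h
  induction p with
  | nil => exact hu
  | cons hadj _ ih => exact ih hadj.2.2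

lemma positiveGraph_le_deleteEdges {u w : U} (h : y u ≤ 0 ∨ y w ≤ 0) :
    H.positiveGraph y ≤ H.deleteEdges {s(u, w)} := by
  rintro a b ⟨hab, ha, hb⟩
  refine (deleteEdges_adj ..).2 ⟨hab, fun heq => ?_⟩
  rw [Set.mem_singleton_iff, Sym2.eq_iff] at heq
  rcases heq with ⟨rfl, rfl⟩ | ⟨rfl, rfl⟩ <;> rcases h with h | h <;> linarith

lemma Preconnected.exists_adj_pos_neg (hH : H.Preconnected) (hnz : ∀ v, y v ≠ 0) {p n : U}
    (hp : 0 < y p) (hn : y n < 0) : ∃ u w, H.Adj u w ∧ 0 < y u ∧ y w < 0 := by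
  obtain ⟨d, -, hd₁, hd₂⟩ :=
    (hH p n).some.exists_boundary_dart {v | 0 < y v} hp (not_lt.2 hn.le)
  exact ⟨d.fst, d.snd, d.adj, hd₁, (hnz _).lt_of_le (not_lt.1 hd₂)⟩

lemma IsAcyclic.eq_of_adj_pos_neg (hH : H.IsAcyclic)
    (hpos : ∀ u u', 0 < y u → 0 < y u' → (H.positiveGraph y).Reachable u u')
    (hneg : ∀ w w', y w < 0 → y w' < 0 → (H.positiveGraph (-y)).Reachable w w')
    {u w u' w' : U} (huw : H.Adj u w) (hu : 0 < y u) (hw : y w < 0)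
    (hu'w' : H.Adj u' w') (hu' : 0 < y u') (hw' : y w' < 0) : u' = u ∧ w' = w := by
  by_contra hne
  refine isBridge_iff.1 (isAcyclic_iff_forall_adj_isBridge.1 hH huw) ?_
  have hu'w'_del : (H.deleteEdges {s(u, w)}).Adj u' w' := by
    refine (deleteEdges_adj ..).2 ⟨hu'w', fun heq => ?_⟩
    rw [Set.mem_singleton_iff, Sym2.eq_iff] at heq
    rcases heq with heq | ⟨rfl, -⟩
    · exact hne heq
    · linarith
  exact ((hpos u u' hu hu').mono (positiveGraph_le_deleteEdges (.inr hw.le))).trans <|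
    hu'w'_del.reachable.trans <|
      (hneg w' w hw' hw).mono (positiveGraph_le_deleteEdges (.inl (neg_nonpos.2 hu.le)))

end Sign

variable {G : SimpleGraph V} [DecidableRel G.Adj]

lemma lapMatrix_mulVec_apply_eq_sum_sub (x : V → ℝ) (a : V) :
    (G.lapMatrix ℝ *ᵥ x) a = ∑ b ∈ G.neighborFinset a, (x a - x b) := by
  rw [lapMatrix_mulVec_apply, sum_sub_distrib, sum_const, card_neighborFinset_eq_degree,
    nsmul_eq_mul]

lemma lapMatrix_quadratic_nonneg (x : V → ℝ) : 0 ≤ x ⬝ᵥ G.lapMatrix ℝ *ᵥ x := by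
  simpa using (posSemidef_lapMatrix ℝ G).dotProduct_mulVec_nonneg x

lemma lapMatrix_quadratic_pos (hG : G.Connected) {x : V → ℝ} (hx : x ≠ 0)
    (hsum : ∑ v, x v = 0) : 0 < x ⬝ᵥ G.lapMatrix ℝ *ᵥ x := by
  refine (lapMatrix_quadratic_nonneg x).lt_of_ne fun h => hx ?_
  obtain ⟨v₀⟩ := hG.nonempty
  have hconst : ∀ v, x v = x v₀ := fun v =>
    (lapMatrix_toLinearMap₂'_apply'_eq_zero_iff_forall_reachable G x).1
      (by rw [toLinearMap₂'_apply', h]) v v₀ (hG v v₀)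
  rw [sum_congr rfl fun v _ => hconst v, sum_const, card_univ, nsmul_eq_mul] at hsum
  have hx₀ : x v₀ = 0 :=
    (mul_eq_zero.1 hsum).resolve_left (Nat.cast_ne_zero.2 (Fintype.card_pos_iff.2 ⟨v₀⟩).ne')
  funext v
  rw [hconst, hx₀, Pi.zero_apply]

lemma sum_eq_zero_of_lapMatrix_mulVec_eq_smul {μ : ℝ} (hμ : μ ≠ 0) {y : V → ℝ}
    (h : G.lapMatrix ℝ *ᵥ y = μ • y) : ∑ v, y v = 0 := by
  have hone : (fun _ => 1) ⬝ᵥ G.lapMatrix ℝ *ᵥ y = 0 := by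
    rw [dotProduct_mulVec, ← mulVec_transpose, (isSymm_lapMatrix ℝ G).eq,
      lapMatrix_mulVec_const_eq_zero, zero_dotProduct]
  rw [h, dotProduct_smul, smul_eq_mul, mul_eq_zero] at hone
  simpa [dotProduct] using hone.resolve_left hμ

lemma algConn_le_rayleigh {x : V → ℝ} (hx : x ≠ 0) (hsum : ∑ v, x v = 0) :
    algConn G ≤ x ⬝ᵥ G.lapMatrix ℝ *ᵥ x / (x ⬝ᵥ x) :=
  csInf_le ⟨0, by
    rintro r ⟨x, hx, -, rfl⟩
    exact div_nonneg (lapMatrix_quadratic_nonneg x) (dotProduct_self_pos hx).le⟩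
    ⟨x, hx, hsum, rfl⟩

lemma algConn_mul_le {x : V → ℝ} (hx : x ≠ 0) (hsum : ∑ v, x v = 0) :
    algConn G * (x ⬝ᵥ x) ≤ x ⬝ᵥ G.lapMatrix ℝ *ᵥ x :=
  (le_div_iff₀ (dotProduct_self_pos hx)).1 (algConn_le_rayleigh hx hsum)

theorem algConn_pos (hG : G.Connected) (hcard : 2 ≤ Fintype.card V) : 0 < algConn G := by
  set R : (V → ℝ) → ℝ := fun x => x ⬝ᵥ G.lapMatrix ℝ *ᵥ x / (x ⬝ᵥ x)
  set K : Set (V → ℝ) := {x | ∑ v, x v = 0} ∩ Metric.sphere 0 1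
  have hK : IsCompact K :=
    (isCompact_sphere 0 1).inter_left (isClosed_eq (by fun_prop) continuous_const)
  have hK₀ : ∀ x ∈ K, x ≠ 0 := by
    rintro x ⟨-, hx⟩ rfl
    simp at hx
  have hnormalize : ∀ x : V → ℝ, x ≠ 0 → ∑ v, x v = 0 → ‖x‖⁻¹ • x ∈ K ∧ R (‖x‖⁻¹ • x) = R x :=
    fun x hx hsum =>
      ⟨⟨by simp [← mul_sum, hsum], mem_sphere_zero_iff_norm.2 (norm_smul_inv_norm hx)⟩,
        rayleigh_smul _ x (inv_ne_zero (norm_ne_zero_iff.2 hx))⟩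
  have hKne : K.Nonempty := by
    obtain ⟨v₀, v₁, hv⟩ := Fintype.exists_pair_of_one_lt_card hcard
    refine ⟨_, (hnormalize (Pi.single v₀ 1 - Pi.single v₁ 1) ?_ (by simp)).1⟩
    intro h
    simpa [Pi.single_apply, hv] using congrFun h v₀
  have hR : ContinuousOn R K :=
    ContinuousOn.div (by fun_prop) (by fun_prop) fun x hx => (dotProduct_self_pos (hK₀ x hx)).ne'
  obtain ⟨x₀, hx₀, hmin⟩ := hK.exists_isMinOn hKne hR
  refine (div_pos (lapMatrix_quadratic_pos hG (hK₀ x₀ hx₀) hx₀.1)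
    (dotProduct_self_pos (hK₀ x₀ hx₀))).trans_le (le_csInf ⟨_, x₀, hK₀ x₀ hx₀, hx₀.1, rfl⟩ ?_)
  rintro r ⟨x, hx, hsum, rfl⟩
  obtain ⟨hxK, hRx⟩ := hnormalize x hx hsum
  show R x₀ ≤ R x
  exact hRx ▸ hmin hxK

lemma indicator_dotProduct_lapMatrix_mulVec_indicator {C D : Set V} (hCD : Disjoint C D)
    (y : V → ℝ) : C.indicator y ⬝ᵥ G.lapMatrix ℝ *ᵥ D.indicator y
      = -∑ a, ∑ b ∈ G.neighborFinset a, C.indicator y a * D.indicator y b := by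
  simp only [dotProduct, lapMatrix_mulVec_apply_eq_sum_sub, mul_sum, ← sum_neg_distrib]
  refine sum_congr rfl fun a _ => sum_congr rfl fun b _ => ?_
  by_cases ha : a ∈ C
  · rw [Set.indicator_of_notMem (hCD.notMem_of_mem_left ha)]
    ring
  · simp [Set.indicator_of_notMem ha]

lemma indicator_dotProduct_lapMatrix_mulVec_indicator_eq_zero {C D : Set V}
    (hCD : Disjoint C D) (hCD' : ∀ a ∈ C, ∀ b ∈ D, ¬G.Adj a b) (y : V → ℝ) :
    C.indicator y ⬝ᵥ G.lapMatrix ℝ *ᵥ D.indicator y = 0 := by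
  rw [indicator_dotProduct_lapMatrix_mulVec_indicator hCD, neg_eq_zero]
  refine sum_eq_zero fun a _ => sum_eq_zero fun b hb => ?_
  by_cases ha : a ∈ C
  · rw [Set.indicator_of_notMem fun hb' => hCD' a ha b hb' ((mem_neighborFinset _ _ _).1 hb),
      mul_zero]
  · rw [Set.indicator_of_notMem ha, zero_mul]

section Fiedler

variable {y : V → ℝ} {C : Set V}

lemma indicator_dotProduct_lapMatrix_mulVec_indicator_compl_pos (hG : G.Connected)
    (hnz : ∀ v, y v ≠ 0) (hpos : ∀ v ∈ C, 0 < y v)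
    (hclosed : ∀ a ∈ C, ∀ b, G.Adj a b → 0 < y b → b ∈ C) {u w : V} (hu : u ∈ C) (hw : w ∉ C) :
    0 < C.indicator y ⬝ᵥ G.lapMatrix ℝ *ᵥ Cᶜ.indicator y := by
  have hcross : ∀ a b, G.Adj a b → a ∈ C → b ∉ C → C.indicator y a * Cᶜ.indicator y b < 0 :=
    fun a b hab ha hb => by
      rw [Set.indicator_of_mem ha, Set.indicator_of_mem (Set.mem_compl hb)]
      exact mul_neg_of_pos_of_neg (hpos a ha)
        ((hnz b).lt_of_le (not_lt.1 fun hb' => hb (hclosed a ha b hab hb')))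
  have hterm : ∀ a b, G.Adj a b → C.indicator y a * Cᶜ.indicator y b ≤ 0 := fun a b hab => by
    by_cases ha : a ∈ C
    · by_cases hb : b ∈ C
      · rw [Set.indicator_of_notMem (Set.notMem_compl_iff.2 hb), mul_zero]
      · exact (hcross a b hab ha hb).le
    · rw [Set.indicator_of_notMem ha, zero_mul]
  obtain ⟨d, -, hd₁, hd₂⟩ := (hG.preconnected u w).some.exists_boundary_dart C hu hw
  rw [indicator_dotProduct_lapMatrix_mulVec_indicator disjoint_compl_right, neg_pos]
  refine sum_neg' (fun a _ => sum_nonpos fun b hb => hterm a b ((mem_neighborFinset _ _ _).1 hb))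
    ⟨d.fst, mem_univ _, sum_neg' (fun b hb => hterm _ b ((mem_neighborFinset _ _ _).1 hb))
      ⟨d.snd, (mem_neighborFinset _ _ _).2 d.adj, hcross _ _ d.adj hd₁ hd₂⟩⟩

lemma lapMatrix_quadratic_indicator_lt {μ : ℝ} (hG : G.Connected)
    (heig : G.lapMatrix ℝ *ᵥ y = μ • y) (hnz : ∀ v, y v ≠ 0) (hpos : ∀ v ∈ C, 0 < y v)
    (hclosed : ∀ a ∈ C, ∀ b, G.Adj a b → 0 < y b → b ∈ C) {u w : V} (hu : u ∈ C) (hw : w ∉ C) :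
    C.indicator y ⬝ᵥ G.lapMatrix ℝ *ᵥ C.indicator y < μ * (C.indicator y ⬝ᵥ C.indicator y) := by
  have hsplit := congrArg (C.indicator y ⬝ᵥ G.lapMatrix ℝ *ᵥ ·) (Set.indicator_self_add_compl C y)
  have hdiag := congrArg (C.indicator y ⬝ᵥ ·) (Set.indicator_self_add_compl C y)
  simp only [mulVec_add, dotProduct_add] at hsplit hdiag
  rw [indicator_dotProduct_indicator_of_disjoint disjoint_compl_right, add_zero] at hdiag
  rw [heig, dotProduct_smul, smul_eq_mul, ← hdiag] at hsplit
  linarith [indicator_dotProduct_lapMatrix_mulVec_indicator_compl_pos hG hnz hpos hclosed hu hw]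

end Fiedler

lemma algConn_mul_le_or_of_orthogonal {z₁ z₂ : V → ℝ} (h : z₁ ⬝ᵥ z₂ = 0)
    (hL₁₂ : z₁ ⬝ᵥ G.lapMatrix ℝ *ᵥ z₂ = 0) (hL₂₁ : z₂ ⬝ᵥ G.lapMatrix ℝ *ᵥ z₁ = 0)
    (hs₁ : ∑ v, z₁ v ≠ 0) (hs₂ : ∑ v, z₂ v ≠ 0) :
    algConn G * (z₁ ⬝ᵥ z₁) ≤ z₁ ⬝ᵥ G.lapMatrix ℝ *ᵥ z₁ ∨
      algConn G * (z₂ ⬝ᵥ z₂) ≤ z₂ ⬝ᵥ G.lapMatrix ℝ *ᵥ z₂ := by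
  set s₁ := ∑ v, z₁ v
  set s₂ := ∑ v, z₂ v
  have hz₁ : 0 < z₁ ⬝ᵥ z₁ := dotProduct_self_pos fun h => hs₁ (by simp [s₁, h])
  have hz₂ : 0 < z₂ ⬝ᵥ z₂ := dotProduct_self_pos fun h => hs₂ (by simp [s₂, h])
  set z := s₂ • z₁ - s₁ • z₂
  have hsum : ∑ v, z v = 0 := by
    simp only [z, Pi.sub_apply, Pi.smul_apply, smul_eq_mul, sum_sub_distrib, ← mul_sum]
    ring
  have hzz : z ⬝ᵥ z = s₂ ^ 2 * (z₁ ⬝ᵥ z₁) + s₁ ^ 2 * (z₂ ⬝ᵥ z₂) := by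
    simp only [z, sub_dotProduct, dotProduct_sub, smul_dotProduct, dotProduct_smul, smul_eq_mul,
      h, dotProduct_comm z₂ z₁]
    ring
  have hLz : z ⬝ᵥ G.lapMatrix ℝ *ᵥ z = s₂ ^ 2 * (z₁ ⬝ᵥ G.lapMatrix ℝ *ᵥ z₁) +
      s₁ ^ 2 * (z₂ ⬝ᵥ G.lapMatrix ℝ *ᵥ z₂) := by
    simp only [z, mulVec_sub, mulVec_smul, sub_dotProduct, dotProduct_sub, smul_dotProduct,
      dotProduct_smul, smul_eq_mul, hL₁₂, hL₂₁]
    ring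
  have hs₁' : 0 < s₁ ^ 2 := by positivity
  have hs₂' : 0 < s₂ ^ 2 := by positivity
  have hz : z ≠ 0 := fun h0 => by
    have : 0 < z ⬝ᵥ z := by rw [hzz]; positivity
    simp [h0] at this
  have hle := algConn_mul_le (G := G) hz hsum
  rw [hzz, hLz] at hle
  by_contra! hlt
  linarith [mul_lt_mul_of_pos_left hlt.1 hs₂', mul_lt_mul_of_pos_left hlt.2 hs₁']

theorem reachable_positiveGraph (hG : G.Connected) {y : V → ℝ}
    (heig : G.lapMatrix ℝ *ᵥ y = algConn G • y) (hnz : ∀ v, y v ≠ 0) {u₁ u₂ : V}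
    (h₁ : 0 < y u₁) (h₂ : 0 < y u₂) : (G.positiveGraph y).Reachable u₁ u₂ := by
  by_contra hne
  have hpos : ∀ {u}, 0 < y u → ∀ v ∈ {v | (G.positiveGraph y).Reachable u v}, 0 < y v :=
    fun hu v hv => pos_of_reachable_positiveGraph hv hu
  have hclosed : ∀ {u}, 0 < y u → ∀ a ∈ {v | (G.positiveGraph y).Reachable u v}, ∀ b,
      G.Adj a b → 0 < y b → b ∈ {v | (G.positiveGraph y).Reachable u v} :=
    fun hu a ha b hab hb => ha.trans (Adj.reachable ⟨hab, hpos hu a ha, hb⟩)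
  set C := {v | (G.positiveGraph y).Reachable u₁ v}
  set D := {v | (G.positiveGraph y).Reachable u₂ v}
  have hCD : Disjoint C D := Set.disjoint_left.2 fun v hv₁ hv₂ => hne (hv₁.trans hv₂.symm)
  have hsum : ∀ {E : Set V} {u}, (∀ v ∈ E, 0 < y v) → u ∈ E → ∑ v, E.indicator y v ≠ 0 :=
    fun hE hu => (sum_pos' (fun v _ => Set.indicator_nonneg (fun v hv => (hE v hv).le) v)
      ⟨_, mem_univ _, by rw [Set.indicator_of_mem hu]; exact hE _ hu⟩).ne'
  have hLCD := indicator_dotProduct_lapMatrix_mulVec_indicator_eq_zero hCD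
    (fun a ha b hb hab => hCD.notMem_of_mem_left (hclosed h₁ a ha b hab (hpos h₂ b hb)) hb) y
  have hLDC := indicator_dotProduct_lapMatrix_mulVec_indicator_eq_zero hCD.symm
    (fun a ha b hb hab => hCD.notMem_of_mem_right (hclosed h₂ a ha b hab (hpos h₁ b hb)) hb) y
  rcases algConn_mul_le_or_of_orthogonal (indicator_dotProduct_indicator_of_disjoint hCD y y)
      hLCD hLDC (hsum (hpos h₁) .rfl) (hsum (hpos h₂) .rfl) with h | h
  · exact (lapMatrix_quadratic_indicator_lt hG heig hnz (hpos h₁) (hclosed h₁) .rfl hne).not_ge h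
  · exact (lapMatrix_quadratic_indicator_lt hG heig hnz (hpos h₂) (hclosed h₂) .rfl
      fun h => hne h.symm).not_ge h

end SimpleGraph

theorem stmt12_general (T : SimpleGraph V) [DecidableRel T.Adj] (hT : T.IsTree)
    (hcard : 2 ≤ Fintype.card V)
    (y : V → ℝ)
    (heig : (T.lapMatrix ℝ) *ᵥ y = algConn T • y)
    (hnz : ∀ v, y v ≠ 0) :
    ∃ u w : V, T.Adj u w ∧ 0 < y u ∧ y w < 0 ∧
      ∀ u' w' : V, T.Adj u' w' → 0 < y u' → y w' < 0 → u' = u ∧ w' = w := by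
  have hsum : ∑ v, y v = 0 :=
    sum_eq_zero_of_lapMatrix_mulVec_eq_smul (algConn_pos hT.connected hcard).ne' heig
  have hneig : T.lapMatrix ℝ *ᵥ -y = algConn T • -y := by rw [mulVec_neg, heig, smul_neg]
  have hnnz : ∀ v, (-y) v ≠ 0 := fun v => neg_ne_zero.2 (hnz v)
  obtain ⟨v₀⟩ := hT.connected.nonempty
  obtain ⟨p, -, hp⟩ := exists_pos_of_sum_zero_of_exists_nonzero y hsum ⟨v₀, mem_univ _, hnz v₀⟩
  obtain ⟨n, -, hn⟩ := exists_pos_of_sum_zero_of_exists_nonzero (-y)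
    (by simp [sum_neg_distrib, hsum]) ⟨v₀, mem_univ _, hnnz v₀⟩
  obtain ⟨u, w, huw, hu, hw⟩ :=
    hT.connected.preconnected.exists_adj_pos_neg hnz hp (neg_pos.1 hn)
  exact ⟨u, w, huw, hu, hw, fun u' w' hu'w' hu' hw' => hT.isAcyclic.eq_of_adj_pos_neg
    (fun _ _ => reachable_positiveGraph hT.connected heig hnz)
    (fun _ _ ha hb => reachable_positiveGraph hT.connected hneig hnnz (neg_pos.2 ha) (neg_pos.2 hb))
    huw hu hw hu'w' hu' hw'⟩

theorem stmt12 (T : SimpleGraph V) [DecidableRel T.Adj] (hT : T.IsTree)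
    (hcard : 2 ≤ Fintype.card V)
    (y : V → ℝ) (hy : y ≠ 0)
    (heig : (T.lapMatrix ℝ) *ᵥ y = algConn T • y)
    (hnz : ∀ v, y v ≠ 0) :
    ∃ u w : V, T.Adj u w ∧ 0 < y u ∧ y w < 0 ∧
      ∀ u' w' : V, T.Adj u' w' → 0 < y u' → y w' < 0 → u' = u ∧ w' = w :=
  stmt12_general T hT hcard y heig hnz
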